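/- The restrictions of w1, w2, w3 to the sublattice ℤα1+ℤα2+ℤα3 act as the simple reflections of the associated root system: for i = 1,2,3 and every v ∈ ℤα1+ℤα2+ℤα3, one has wi(v) = v − 2((αi·v)/(αi·αi))·αi; explicitly w1(α1) = −α1, w1(α2) = α2+2α1, w1(α3) = α3+2α1, w2(α1) = α1+2α2, w2(α2) = −α2, w2(α3) = α3+2α2, w3(α1) = α1+2α3, w3(α2) = α2+2α3, w3(α3) = −α3. Moreover σ12 interchanges α1 and α2 and fixes α3, and σ13 interchanges α1 and α3 and fixes α2. -/
import Mathlib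


/-- The Picard lattice of the space of initial values of the HV equation:
the free ℤ-module of rank 16 with basis `H0, H1, E1, …, E14`. -/
abbrev Pic : Type := Fin 16 → ℤ

/-- The class `H0` (total transform of a line `x = const`). -/
def H0 : Pic := Pi.single 0 1

/-- The class `H1` (total transform of a line `y = const`). -/
def H1 : Pic := Pi.single 1 1

/-- The exceptional classes: `E k` is the paper's `E_{k+1}` for `k : Fin 14`. -/
def E (k : Fin 14) : Pic := Pi.single k.succ.succ 1

/-- The intersection form: `H0·H1 = 1`, `H0·H0 = H1·H1 = 0`, `Ek·El = -δ`, `Hi·Ek = 0`. -/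
def ip (u v : Pic) : ℤ :=
  u 0 * v 1 + u 1 * v 0 - ∑ k : Fin 14, u k.succ.succ * v k.succ.succ

/-- The canonical class `K = -2H0 - 2H1 + E1 + ⋯ + E14`. -/
def KX : Pic := (-2 : ℤ) • H0 + (-2 : ℤ) • H1 + ∑ k : Fin 14, E k

/-- The classes `D0, …, D12` of the irreducible components of `-K`. -/
def D : Fin 13 → Pic :=
  ![E 0 - E 1, E 1 - E 2, E 2 - E 3,
    E 4 - E 5, E 5 - E 6, E 6 - E 7,
    E 8 - E 9, E 10 - E 11, E 11 - E 12, E 12 - E 13,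
    H0 - E 0 - E 1 - E 8, H1 - E 4 - E 5 - E 8, E 9 - E 10 - E 11]

/-- The root basis `α1, α2, α3` of the orthogonal complement of the `D`'s. -/
def α : Fin 3 → Pic :=
  ![(2 : ℤ) • H1 - E 0 - E 1 - E 2 - E 3,
    (2 : ℤ) • H0 - E 4 - E 5 - E 6 - E 7,
    (2 : ℤ) • H0 + (2 : ℤ) • H1 - (2 : ℤ) • E 8 - (2 : ℤ) • E 9 - E 10 - E 11 - E 12 - E 13]

/-- The ℤ-linear map sending the `j`-th basis vector to `f j`. -/
def ofImages (f : Fin 16 → Pic) : Pic →ₗ[ℤ] Pic :=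
  Matrix.toLin' (Matrix.of fun i j => f j i)

/-- The generator `w1`. -/
def w1 : Pic →ₗ[ℤ] Pic := ofImages
  ![H0 + (2 : ℤ) • H1 - E 0 - E 1 - E 2 - E 3, H1,
    H1 - E 3, H1 - E 2, H1 - E 1, H1 - E 0,
    E 4, E 5, E 6, E 7, E 8, E 9, E 10, E 11, E 12, E 13]

/-- The generator `w2`. -/
def w2 : Pic →ₗ[ℤ] Pic := ofImages
  ![H0, (2 : ℤ) • H0 + H1 - E 4 - E 5 - E 6 - E 7,
    E 0, E 1, E 2, E 3,
    H0 - E 7, H0 - E 6, H0 - E 5, H0 - E 4,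
    E 8, E 9, E 10, E 11, E 12, E 13]

/-- The generator `w3`. -/
def w3 : Pic →ₗ[ℤ] Pic := ofImages
  ![H0 + α 2, H1 + α 2,
    E 0, E 1, E 2, E 3, E 4, E 5, E 6, E 7,
    E 8 + α 2, E 9 + α 2,
    E 10 + (H0 + H1 - E 8 - E 9 - E 10 - E 13),
    E 11 + (H0 + H1 - E 8 - E 9 - E 11 - E 12),
    E 12 + (H0 + H1 - E 8 - E 9 - E 11 - E 12),
    E 13 + (H0 + H1 - E 8 - E 9 - E 10 - E 13)]

/-- The generator `σ12`. -/
def s12 : Pic →ₗ[ℤ] Pic := ofImages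
  ![H1, H0, E 4, E 5, E 6, E 7, E 0, E 1, E 2, E 3,
    E 8, E 9, E 10, E 11, E 12, E 13]

/-- The generator `σ13`. -/
def s13 : Pic →ₗ[ℤ] Pic := ofImages
  ![H0, H0 + H1 - E 8 - E 9,
    E 10, E 11, E 12, E 13,
    E 4, E 5, E 6, E 7,
    H0 - E 9, H0 - E 8,
    E 0, E 1, E 2, E 3]

/-- The action `φ` of the Hietarinta–Viallet equation on the Picard lattice. -/
def phiHV : Pic →ₗ[ℤ] Pic := ofImages
  ![(3 : ℤ) • H0 + H1 - E 4 - E 5 - E 6 - E 7 - E 8 - E 9, H0,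
    H0 - E 7, H0 - E 6, H0 - E 5, H0 - E 4,
    E 10, E 11, E 12, E 13,
    H0 - E 9, H0 - E 8,
    E 0, E 1, E 2, E 3]

/-- The three reflection generators, indexed by `Fin 3`. -/
def wvec : Fin 3 → (Pic →ₗ[ℤ] Pic) := ![w1, w2, w3]

/-- On the sublattice `ℤα1 + ℤα2 + ℤα3`, the maps `w1, w2, w3` act as the simple
reflections `v ↦ v - 2((αi·v)/(αi·αi))·αi` of the associated root system; explicitly
`wi(αi) = -αi` and `wi(αj) = αj + 2αi` for `j ≠ i`; moreover `σ12` interchanges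
`α1, α2` fixing `α3`, and `σ13` interchanges `α1, α3` fixing `α2`. -/

lemma ip_add (u x y : Pic) : ip u (x + y) = ip u x + ip u y := by
  simp only [ip, Pi.add_apply, mul_add, Finset.sum_add_distrib]; ring

lemma ip_smul (u : Pic) (c : ℤ) (x : Pic) : ip u (c • x) = c * ip u x := by
  simp only [ip, Pi.smul_apply, smul_eq_mul, mul_sub, mul_add, Finset.mul_sum,
    mul_left_comm]

set_option maxHeartbeats 4000000 in
lemma ip_diag : ∀ i : Fin 3, ip (α i) (α i) = -4 := by decide

set_option maxHeartbeats 4000000 in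
lemma base00 : ip (α 0) (α 0) = 4 * (-1) ∧ wvec 0 (α 0) = α 0 + (2 * (-1)) • α 0 := by
  constructor <;> decide
set_option maxHeartbeats 4000000 in
lemma base01 : ip (α 0) (α 1) = 4 * 1 ∧ wvec 0 (α 1) = α 1 + (2 * 1) • α 0 := by
  constructor <;> decide
set_option maxHeartbeats 4000000 in
lemma base02 : ip (α 0) (α 2) = 4 * 1 ∧ wvec 0 (α 2) = α 2 + (2 * 1) • α 0 := by
  constructor <;> decide
set_option maxHeartbeats 4000000 in
lemma base10 : ip (α 1) (α 0) = 4 * 1 ∧ wvec 1 (α 0) = α 0 + (2 * 1) • α 1 := by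
  constructor <;> decide
set_option maxHeartbeats 4000000 in
lemma base11 : ip (α 1) (α 1) = 4 * (-1) ∧ wvec 1 (α 1) = α 1 + (2 * (-1)) • α 1 := by
  constructor <;> decide
set_option maxHeartbeats 4000000 in
lemma base12 : ip (α 1) (α 2) = 4 * 1 ∧ wvec 1 (α 2) = α 2 + (2 * 1) • α 1 := by
  constructor <;> decide
set_option maxHeartbeats 4000000 in
lemma base20 : ip (α 2) (α 0) = 4 * 1 ∧ wvec 2 (α 0) = α 0 + (2 * 1) • α 2 := by
  constructor <;> decide
set_option maxHeartbeats 4000000 in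
lemma base21 : ip (α 2) (α 1) = 4 * 1 ∧ wvec 2 (α 1) = α 1 + (2 * 1) • α 2 := by
  constructor <;> decide
set_option maxHeartbeats 4000000 in
lemma base22 : ip (α 2) (α 2) = 4 * (-1) ∧ wvec 2 (α 2) = α 2 + (2 * (-1)) • α 2 := by
  constructor <;> decide

lemma base (i j : Fin 3) : ∃ n : ℤ, ip (α i) (α j) = 4 * n ∧
    wvec i (α j) = α j + (2 * n) • α i := by
  fin_cases i <;> fin_cases j
  exacts [⟨-1, base00⟩, ⟨1, base01⟩, ⟨1, base02⟩, ⟨1, base10⟩, ⟨-1, base11⟩,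
    ⟨1, base12⟩, ⟨1, base20⟩, ⟨1, base21⟩, ⟨-1, base22⟩]

lemma span_part (i : Fin 3) (v : Pic) (hv : v ∈ Submodule.span ℤ ({α 0, α 1, α 2} : Set Pic)) :
    wvec i v = v - (2 * (ip (α i) v / ip (α i) (α i))) • α i := by
  have key : ∃ n : ℤ, ip (α i) v = 4 * n ∧ wvec i v = v + (2 * n) • α i := by
    induction hv using Submodule.span_induction with
    | mem x hx =>
        rcases hx with rfl | rfl | rfl
        · exact base i 0
        · exact base i 1
        · exact base i 2
    | zero => exact ⟨0, by simp [ip], by simp⟩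
    | add x y hx hy ihx ihy =>
        obtain ⟨n, hn, hw⟩ := ihx
        obtain ⟨m, hm, hw'⟩ := ihy
        refine ⟨n + m, ?_, ?_⟩
        · rw [ip_add, hn, hm]; ring
        · rw [map_add, hw, hw']
          rw [show (2 * (n + m)) • α i = (2 * n) • α i + (2 * m) • α i by
            rw [← add_smul]; ring_nf]
          abel
    | smul a x hx ihx =>
        obtain ⟨n, hn, hw⟩ := ihx
        refine ⟨a * n, ?_, ?_⟩
        · rw [ip_smul, hn]; ring
        · rw [map_smul, hw, smul_add, smul_smul]
          rw [show a * (2 * n) = 2 * (a * n) by ring]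
  obtain ⟨n, hn, hw⟩ := key
  rw [ip_diag, hn, hw]
  have : 2 * (4 * n / (-4 : ℤ)) = -(2 * n) := by omega
  rw [this, neg_smul, sub_neg_eq_add]

set_option maxHeartbeats 4000000 in
lemma explicit_part :
    (w1 (α 0) = -α 0 ∧ w1 (α 1) = α 1 + (2 : ℤ) • α 0 ∧ w1 (α 2) = α 2 + (2 : ℤ) • α 0) ∧
    (w2 (α 0) = α 0 + (2 : ℤ) • α 1 ∧ w2 (α 1) = -α 1 ∧ w2 (α 2) = α 2 + (2 : ℤ) • α 1) ∧
    (w3 (α 0) = α 0 + (2 : ℤ) • α 2 ∧ w3 (α 1) = α 1 + (2 : ℤ) • α 2 ∧ w3 (α 2) = -α 2) ∧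
    (s12 (α 0) = α 1 ∧ s12 (α 1) = α 0 ∧ s12 (α 2) = α 2) ∧
    (s13 (α 0) = α 2 ∧ s13 (α 1) = α 1 ∧ s13 (α 2) = α 0) := by
  refine ⟨⟨?_, ?_, ?_⟩, ⟨?_, ?_, ?_⟩, ⟨?_, ?_, ?_⟩, ⟨?_, ?_, ?_⟩, ⟨?_, ?_, ?_⟩⟩ <;> decide

theorem restriction_is_simple_reflections :
    (∀ i : Fin 3, ∀ v ∈ Submodule.span ℤ ({α 0, α 1, α 2} : Set Pic),
      wvec i v = v - (2 * (ip (α i) v / ip (α i) (α i))) • α i) ∧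
    (w1 (α 0) = -α 0 ∧ w1 (α 1) = α 1 + (2 : ℤ) • α 0 ∧ w1 (α 2) = α 2 + (2 : ℤ) • α 0) ∧
    (w2 (α 0) = α 0 + (2 : ℤ) • α 1 ∧ w2 (α 1) = -α 1 ∧ w2 (α 2) = α 2 + (2 : ℤ) • α 1) ∧
    (w3 (α 0) = α 0 + (2 : ℤ) • α 2 ∧ w3 (α 1) = α 1 + (2 : ℤ) • α 2 ∧ w3 (α 2) = -α 2) ∧
    (s12 (α 0) = α 1 ∧ s12 (α 1) = α 0 ∧ s12 (α 2) = α 2) ∧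
    (s13 (α 0) = α 2 ∧ s13 (α 1) = α 1 ∧ s13 (α 2) = α 0) := by
  exact ⟨span_part, explicit_part⟩
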